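/- Let a, b be integers with a ≥ 1, b ≥ 1 and a*b ≥ 4, let c, d be the associated recursive sequences and g n = gcd(c n, d n). Let p be a prime such that a*b ≡ 4 (mod p) and such that it is NOT the case that p divides exactly one of a and b. Then p is the smallest positive integer k such that p divides g k; that is, p divides g p, and p does not divide g m for any m with 0 < m < p. -/

import Mathlib

/-!
When `a * b = 4` the rank-two recursion degenerates (its characteristic roots coincide), and the
sequences grow linearly: `c (2k) = k a`, `d (2k) = k b`, `c (2k+1) = d (2k+1) = 2k + 1`. This holds
in any commutative ring where `a * b = 4`, in particular in `ZMod p`. For odd `p` the first index at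
which both `c` and `d` vanish mod `p` is therefore `p` itself, because `a` and `b` are units mod `p`.
For `p = 2` it is the index `2`, provided `2` divides both `a` and `b`.
-/

/-- The pair of recursive sequences `(c n, d n)` associated to a generalized
Cartan matrix of rank two with off-diagonal entries `-a`, `-b`:
`c 0 = d 0 = 0`, `c 1 = d 1 = 1`, `c (j+1) = a * d j - c (j-1)`,
`d (j+1) = b * c j - d (j-1)`. -/
def KMcd (a b : ℤ) : ℕ → ℤ × ℤ
  | 0 => (0, 0)
  | 1 => (1, 1)
  | n + 2 => (a * (KMcd a b (n + 1)).2 - (KMcd a b n).1,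
              b * (KMcd a b (n + 1)).1 - (KMcd a b n).2)

/-- The sequence `c`. -/
def KMc (a b : ℤ) (n : ℕ) : ℤ := (KMcd a b n).1

/-- The sequence `d`. -/
def KMd (a b : ℤ) (n : ℕ) : ℤ := (KMcd a b n).2

/-- `g n = gcd (c n) (d n)`. -/
def KMg (a b : ℤ) (n : ℕ) : ℕ := Int.gcd (KMc a b n) (KMd a b n)

section Recursion

variable {R : Type*} [CommRing R] {a b : ℤ}

lemma KMc_add_two (n : ℕ) : KMc a b (n + 2) = a * KMd a b (n + 1) - KMc a b n := rfl

lemma KMd_add_two (n : ℕ) : KMd a b (n + 2) = b * KMc a b (n + 1) - KMd a b n := rfl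

lemma KMcd_cast_of_mul_eq_four (h : (a : R) * b = 4) (k : ℕ) :
    ((KMc a b (2 * k) : R) = k * a ∧ (KMd a b (2 * k) : R) = k * b) ∧
      ((KMc a b (2 * k + 1) : R) = 2 * k + 1 ∧ (KMd a b (2 * k + 1) : R) = 2 * k + 1) := by
  induction k with
  | zero => simp [KMc, KMd, KMcd]
  | succ k ih =>
    obtain ⟨⟨hc₀, hd₀⟩, hc₁, hd₁⟩ := ih
    have hc₂ : (KMc a b (2 * (k + 1)) : R) = (k + 1 : ℕ) * a := by
      rw [show 2 * (k + 1) = 2 * k + 2 by ring, KMc_add_two]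
      push_cast [hd₁, hc₀]
      ring
    have hd₂ : (KMd a b (2 * (k + 1)) : R) = (k + 1 : ℕ) * b := by
      rw [show 2 * (k + 1) = 2 * k + 2 by ring, KMd_add_two]
      push_cast [hc₁, hd₀]
      ring
    refine ⟨⟨hc₂, hd₂⟩, ?_, ?_⟩
    · rw [show 2 * (k + 1) + 1 = 2 * k + 1 + 2 by ring, KMc_add_two,
        show 2 * k + 1 + 1 = 2 * (k + 1) by ring]
      push_cast [hd₂, hc₁]
      linear_combination ((k : R) + 1) * h
    · rw [show 2 * (k + 1) + 1 = 2 * k + 1 + 2 by ring, KMd_add_two,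
        show 2 * k + 1 + 1 = 2 * (k + 1) by ring]
      push_cast [hc₂, hd₁]
      linear_combination ((k : R) + 1) * h

end Recursion

lemma natCast_dvd_KMg_iff (a b : ℤ) (p n : ℕ) :
    p ∣ KMg a b n ↔ (KMc a b n : ZMod p) = 0 ∧ (KMd a b n : ZMod p) = 0 := by
  simp only [KMg, Int.dvd_gcd_iff, ZMod.intCast_zmod_eq_zero_iff_dvd]

lemma ZMod.four_ne_zero {p : ℕ} [Fact p.Prime] (hp : p ≠ 2) : (4 : ZMod p) ≠ 0 := by
  have h2 : (2 : ZMod p) ≠ 0 := by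
    exact_mod_cast (ZMod.natCast_eq_zero_iff 2 p).not.2
      fun h => hp ((Nat.prime_dvd_prime_iff_eq Fact.out Nat.prime_two).1 h)
  simpa [show (4 : ZMod p) = 2 * 2 by norm_num] using h2

section Divisibility

variable {a b : ℤ} {p : ℕ} [Fact p.Prime]

lemma dvd_KMg_self_of_mul_eq_four (h4 : (a : ZMod p) * b = 4) (hab : (p : ℤ) ∣ a ↔ (p : ℤ) ∣ b) :
    p ∣ KMg a b p := by
  rw [natCast_dvd_KMg_iff]
  rcases (Fact.out : p.Prime).eq_two_or_odd' with rfl | ⟨k, rfl⟩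
  · have h2ab : (2 : ℤ) ∣ a * b :=
      (ZMod.intCast_zmod_eq_zero_iff_dvd _ 2).1 (by rw [Int.cast_mul, h4]; rfl)
    obtain ⟨hc, hd⟩ := (KMcd_cast_of_mul_eq_four h4 1).1
    simp only [Nat.cast_one, one_mul, mul_one] at hc hd
    rw [hc, hd, ZMod.intCast_zmod_eq_zero_iff_dvd, ZMod.intCast_zmod_eq_zero_iff_dvd]
    rcases Int.prime_two.dvd_mul.1 h2ab with h | h <;> tauto
  · obtain ⟨hc, hd⟩ := (KMcd_cast_of_mul_eq_four h4 k).2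
    have hp0 : ((2 * k + 1 : ℕ) : ZMod (2 * k + 1)) = 0 := ZMod.natCast_self _
    push_cast at hp0
    exact ⟨hc.trans hp0, hd.trans hp0⟩

lemma not_dvd_KMg_of_lt (h4 : (a : ZMod p) * b = 4) {m : ℕ} (hm₀ : 0 < m) (hmp : m < p) :
    ¬ p ∣ KMg a b m := by
  rw [natCast_dvd_KMg_iff]
  rintro ⟨hcm, -⟩
  have hpm : ¬ p ∣ m := fun h => (Nat.le_of_dvd hm₀ h).not_gt hmp
  rcases Nat.even_or_odd' m with ⟨j, rfl | rfl⟩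
  · have hj : (j : ZMod p) ≠ 0 :=
      (ZMod.natCast_eq_zero_iff j p).not.2 fun h => hpm (h.mul_left 2)
    have ha : (a : ZMod p) ≠ 0 := by
      rintro ha
      rw [ha, zero_mul] at h4
      exact ZMod.four_ne_zero (by omega) h4.symm
    rw [(KMcd_cast_of_mul_eq_four h4 j).1.1] at hcm
    exact mul_ne_zero hj ha hcm
  · rw [(KMcd_cast_of_mul_eq_four h4 j).2.1] at hcm
    exact hpm ((ZMod.natCast_eq_zero_iff _ p).1 (by exact_mod_cast hcm))

end Divisibility

theorem smallest_k_eq_p_of_ab_cong_four_general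
    (a b : ℤ)
    (p : ℕ) (hp : p.Prime)
    (hmod : a * b ≡ 4 [ZMOD (p : ℤ)])
    (hnotone : ¬ (((p : ℤ) ∣ a ∧ ¬ (p : ℤ) ∣ b) ∨ (¬ (p : ℤ) ∣ a ∧ (p : ℤ) ∣ b))) :
    p ∣ KMg a b p ∧ ∀ m : ℕ, 0 < m → m < p → ¬ p ∣ KMg a b m := by
  have := Fact.mk hp
  have h4 : (a : ZMod p) * b = 4 := by
    exact_mod_cast (ZMod.intCast_eq_intCast_iff (a * b) 4 p).2 hmod
  exact ⟨dvd_KMg_self_of_mul_eq_four h4 (by tauto), fun m => not_dvd_KMg_of_lt h4⟩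

theorem smallest_k_eq_p_of_ab_cong_four
    (a b : ℤ) (ha : 1 ≤ a) (hb : 1 ≤ b) (hab : 4 ≤ a * b)
    (p : ℕ) (hp : p.Prime)
    (hmod : a * b ≡ 4 [ZMOD (p : ℤ)])
    (hnotone : ¬ (((p : ℤ) ∣ a ∧ ¬ (p : ℤ) ∣ b) ∨ (¬ (p : ℤ) ∣ a ∧ (p : ℤ) ∣ b))) :
    p ∣ KMg a b p ∧ ∀ m : ℕ, 0 < m → m < p → ¬ p ∣ KMg a b m :=
  smallest_k_eq_p_of_ab_cong_four_general a b p hp hmod hnotone
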